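/- arXiv:2205.09496 — 2 statements merged into one kernel-verified Lean document; each statement's English description precedes it below -/
import Mathlib

section
/- For P(x) = exp(−1/x): ∫₀^{1/2} |P(x)| dx ≤ 4/e², and for every n ≥ 1, ∫₀^{1/2} |P^{(n)}(x)| dx ≤ 2^{3n+1} (n!)² (2n)!. -/
/-- `P x = exp (-1/x)`. -/
noncomputable def Pfun : ℝ → ℝ := fun x => Real.exp (-1 / x)

/-!
On `x > 0`, `P⁽ⁿ⁾(x) = e^{-1/x} qₙ(1/x)` with `q₀ = 1` and `qₙ₊₁ = X² (qₙ - qₙ')`, so `qₙ` has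
degree at most `2n` and coefficients bounded by `(2n)!`. With `y = 1/x ≥ 2` and `y²ⁿ e^{-y} ≤ (2n)!`
this bounds `|P⁽ⁿ⁾|` on `(0, 1/2]` uniformly by `(2n+1) (2n)!²`; integrating, and using
`(2n)! ≤ 4ⁿ (n!)²` and `2n+1 ≤ 2ⁿ⁺²`, gives the claim. For `n = 0` the bound is `1/2 ≤ 4/e²`.
-/

open Polynomial Nat

noncomputable def expNegInvPoly : ℕ → ℝ[X]
  | 0 => 1
  | n + 1 => X ^ 2 * (expNegInvPoly n - derivative (expNegInvPoly n))

lemma natDegree_expNegInvPoly_le (n : ℕ) : (expNegInvPoly n).natDegree ≤ 2 * n := by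
  induction n with
  | zero => simp [expNegInvPoly]
  | succ n ih =>
    calc (X ^ 2 * (expNegInvPoly n - derivative (expNegInvPoly n))).natDegree
        ≤ 2 + (expNegInvPoly n - derivative (expNegInvPoly n)).natDegree :=
          natDegree_mul_le.trans_eq (by rw [natDegree_X_pow])
      _ ≤ 2 + 2 * n := by
          grw [natDegree_sub_le, natDegree_derivative_le, ih]
          omega
      _ = 2 * (n + 1) := by ring

lemma abs_coeff_X_sq_mul_sub_derivative_le {p : ℝ[X]} {d : ℕ} {C : ℝ}
    (hd : p.natDegree ≤ d) (hC : ∀ j, |p.coeff j| ≤ C) (j : ℕ) :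
    |(X ^ 2 * (p - derivative p)).coeff j| ≤ (d + 1) * C := by
  have hC0 : 0 ≤ C := (abs_nonneg _).trans (hC 0)
  rw [coeff_X_pow_mul']
  split_ifs
  · set k := j - 2
    have hderiv : |p.coeff (k + 1)| * (k + 1) ≤ C * d := by
      by_cases h : p.coeff (k + 1) = 0
      · simp only [h, abs_zero, zero_mul]
        positivity
      · have hk : ((k + 1 : ℕ) : ℝ) ≤ d := by exact_mod_cast (le_natDegree_of_ne_zero h).trans hd
        push_cast at hk
        exact mul_le_mul (hC _) hk (by positivity) hC0
    rw [coeff_sub, coeff_derivative]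
    calc |p.coeff k - p.coeff (k + 1) * (k + 1)|
        ≤ |p.coeff k| + |p.coeff (k + 1)| * (k + 1) := by
          grw [abs_sub, abs_mul, abs_of_nonneg (by positivity : (0 : ℝ) ≤ k + 1)]
      _ ≤ (d + 1) * C := by linarith [hC k]
  · simp only [abs_zero]
    positivity

lemma abs_coeff_expNegInvPoly_le (n j : ℕ) : |(expNegInvPoly n).coeff j| ≤ (2 * n)! := by
  induction n generalizing j with
  | zero => rcases j with _ | j <;> simp [expNegInvPoly, coeff_one]
  | succ n ih =>
    calc |(expNegInvPoly (n + 1)).coeff j| ≤ ((2 * n : ℕ) + 1) * ((2 * n)! : ℝ) :=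
          abs_coeff_X_sq_mul_sub_derivative_le (natDegree_expNegInvPoly_le n) ih j
      _ ≤ (2 * (n + 1))! := by
          rw [show 2 * (n + 1) = 2 * n + 1 + 1 by ring, Nat.factorial_succ (2 * n + 1),
            Nat.factorial_succ (2 * n)]
          push_cast
          have : (0 : ℝ) ≤ (2 * n + 1) * (2 * n)! := by positivity
          nlinarith

lemma Pfun_eq : Pfun = fun x => Real.exp (-x⁻¹) := by
  funext x
  simp [Pfun, neg_div]

lemma hasDerivAt_Pfun_mul_eval_inv (p : ℝ[X]) {x : ℝ} (hx : x ≠ 0) :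
    HasDerivAt (fun y => Pfun y * p.eval y⁻¹) (Pfun x * (X ^ 2 * (p - derivative p)).eval x⁻¹) x := by
  have hinv : HasDerivAt (fun y : ℝ => y⁻¹) (-(x ^ 2)⁻¹) x := hasDerivAt_inv hx
  have hP : HasDerivAt Pfun (Pfun x * (x ^ 2)⁻¹) x := by
    simpa only [Pfun_eq, neg_neg] using hinv.fun_neg.exp
  refine (hP.fun_mul ((p.hasDerivAt x⁻¹).comp x hinv)).congr_deriv ?_
  simp only [Function.comp_apply, eval_mul, eval_pow, eval_X, eval_sub]
  field_simp
  ring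

lemma iteratedDeriv_Pfun_eq (n : ℕ) {x : ℝ} (hx : 0 < x) :
    iteratedDeriv n Pfun x = Pfun x * (expNegInvPoly n).eval x⁻¹ := by
  induction n generalizing x with
  | zero => simp [expNegInvPoly]
  | succ n ih =>
    rw [iteratedDeriv_succ]
    have hev : iteratedDeriv n Pfun =ᶠ[nhds x] fun y => Pfun y * (expNegInvPoly n).eval y⁻¹ :=
      Filter.eventually_of_mem (Ioi_mem_nhds hx) fun y hy => ih hy
    exact hev.deriv_eq.trans (hasDerivAt_Pfun_mul_eval_inv _ hx.ne').deriv

lemma abs_eval_le_of_abs_coeff_le {p : ℝ[X]} {d : ℕ} {C : ℝ}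
    (hd : p.natDegree ≤ d) (hC : ∀ j, |p.coeff j| ≤ C) {y : ℝ} (hy : 1 ≤ y) :
    |p.eval y| ≤ (d + 1) * C * y ^ d := by
  rw [eval_eq_sum_range' (Nat.lt_succ_of_le hd)]
  calc |∑ i ∈ Finset.range (d + 1), p.coeff i * y ^ i|
      ≤ ∑ i ∈ Finset.range (d + 1), |p.coeff i * y ^ i| := Finset.abs_sum_le_sum_abs _ _
    _ ≤ ∑ _i ∈ Finset.range (d + 1), C * y ^ d := by
        refine Finset.sum_le_sum fun i hi => ?_
        rw [abs_mul, abs_pow, abs_of_nonneg (show 0 ≤ y by linarith)]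
        exact mul_le_mul (hC i) (pow_le_pow_right₀ hy (Finset.mem_range_succ_iff.mp hi))
          (by positivity) ((abs_nonneg _).trans (hC 0))
    _ = (d + 1) * C * y ^ d := by
        rw [Finset.sum_const, Finset.card_range, nsmul_eq_mul]
        push_cast
        ring

lemma pow_mul_exp_neg_le_factorial {y : ℝ} (hy : 0 ≤ y) (k : ℕ) : y ^ k * Real.exp (-y) ≤ k ! := by
  rw [Real.exp_neg, ← div_eq_mul_inv, div_le_iff₀ (Real.exp_pos y), mul_comm]
  exact (div_le_iff₀ (by positivity)).mp (Real.pow_div_factorial_le_exp y hy k)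

lemma abs_iteratedDeriv_Pfun_le (n : ℕ) {x : ℝ} (hx₀ : 0 < x) (hx₁ : x ≤ 1) :
    |iteratedDeriv n Pfun x| ≤ (2 * n + 1) * ((2 * n)! : ℝ) ^ 2 := by
  set y := x⁻¹
  have hy : 1 ≤ y := (one_le_inv₀ hx₀).mpr hx₁
  have hP : Pfun x = Real.exp (-y) := by rw [Pfun_eq]
  have hq := abs_eval_le_of_abs_coeff_le (natDegree_expNegInvPoly_le n)
    (abs_coeff_expNegInvPoly_le n) hy
  rw [iteratedDeriv_Pfun_eq n hx₀, abs_mul, hP, abs_of_pos (Real.exp_pos _)]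
  push_cast at hq
  calc Real.exp (-y) * |(expNegInvPoly n).eval y|
      ≤ Real.exp (-y) * ((2 * n + 1) * (2 * n)! * y ^ (2 * n)) := by gcongr
    _ = (2 * n + 1) * (2 * n)! * (y ^ (2 * n) * Real.exp (-y)) := by ring
    _ ≤ (2 * n + 1) * (2 * n)! * (2 * n)! := by
        gcongr
        exact pow_mul_exp_neg_le_factorial (by linarith) _
    _ = (2 * n + 1) * ((2 * n)! : ℝ) ^ 2 := by ring

lemma integral_abs_iteratedDeriv_Pfun_le (n : ℕ) :
    (∫ x in (0 : ℝ)..(1 / 2), |iteratedDeriv n Pfun x|) ≤ (2 * n + 1) * ((2 * n)! : ℝ) ^ 2 / 2 := by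
  have h := intervalIntegral.norm_integral_le_of_norm_le_const
    (a := 0) (b := 1 / 2) (f := fun x => |iteratedDeriv n Pfun x|) fun x hx => by
      rw [Set.uIoc_of_le (by norm_num)] at hx
      simpa using abs_iteratedDeriv_Pfun_le n hx.1 (hx.2.trans (by norm_num))
  norm_num at h
  linarith [le_abs_self (∫ x in (0 : ℝ)..(1 / 2), |iteratedDeriv n Pfun x|)]

lemma two_mul_add_one_mul_factorial_le (n : ℕ) : (2 * n + 1) * (2 * n)! ≤ 2 ^ (3 * n + 2) * n ! ^ 2 := by
  have hfac : (2 * n)! ≤ 4 ^ n * n ! ^ 2 := by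
    have h := Nat.choose_mul_factorial_mul_factorial (n := 2 * n) (k := n) (by omega)
    rw [show 2 * n - n = n by omega, ← Nat.centralBinom_eq_two_mul_choose] at h
    rw [← h, mul_assoc, sq]
    exact Nat.mul_le_mul_right _ (Nat.centralBinom_le_four_pow n)
  have hlin : 2 * n + 1 ≤ 2 ^ (n + 2) := by
    have := n.lt_two_pow_self
    rw [pow_succ, pow_succ]
    omega
  calc (2 * n + 1) * (2 * n)! ≤ 2 ^ (n + 2) * (4 ^ n * n ! ^ 2) := Nat.mul_le_mul hlin hfac
    _ = 2 ^ (3 * n + 2) * n ! ^ 2 := by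
        rw [show (4 : ℕ) = 2 ^ 2 by rfl, ← pow_mul, show 3 * n + 2 = n + 2 + 2 * n by ring, pow_add]
        ring

/-- `∫₀^{1/2} |P| ≤ 4/e²` and
`∫₀^{1/2} |P^{(n)}| ≤ 2^{3n+1} (n!)² (2n)!` for every `n ≥ 1`. -/
theorem stmt5 :
    (∫ x in (0:ℝ)..(1/2), |Pfun x|) ≤ 4 / Real.exp 1 ^ 2 ∧
    ∀ n : ℕ, 1 ≤ n →
      (∫ x in (0:ℝ)..(1/2), |iteratedDeriv n Pfun x|) ≤
        2 ^ (3 * n + 1) * (Nat.factorial n) ^ 2 * Nat.factorial (2 * n) := by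
  refine ⟨?_, fun n _ => (integral_abs_iteratedDeriv_Pfun_le n).trans ?_⟩
  · have h := integral_abs_iteratedDeriv_Pfun_le 0
    norm_num at h
    have he : Real.exp 1 ^ 2 < 8 := by nlinarith [Real.exp_one_lt_d9, Real.exp_pos 1]
    refine h.trans ?_
    rw [le_div_iff₀ (by positivity)]
    linarith
  · have h : ((2 * n + 1) * (2 * n)! : ℝ) ≤ 2 ^ (3 * n + 2) * n ! ^ 2 := by
      exact_mod_cast two_mul_add_one_mul_factorial_le n
    rw [div_le_iff₀ two_pos, sq]
    calc (2 * n + 1) * ((2 * n)! * (2 * n)! : ℝ) = ((2 * n + 1) * (2 * n)!) * (2 * n)! := by ring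
      _ ≤ 2 ^ (3 * n + 2) * n ! ^ 2 * (2 * n)! := by gcongr
      _ = 2 ^ (3 * n + 1) * n ! ^ 2 * (2 * n)! * 2 := by ring
end

section
/- Let ρ ∈ ℝ satisfy |kρ| ≥ α/Δ(|k|) for all nonzero k ∈ ℤ, and let f : 𝕋¹ → ℬ have absolutely convergent Fourier series with ‖f̂_k‖ ≤ M/Δ̃(|k|), where ∑_{k≠0} 1/Δ̃(|k|) < ∞. Let w̄ be the weight w̄(x) = c·exp(−1/(x(1−x))) normalized so ∫₀¹w̄ = 1. Then there exist ĉ > 0 and C > 0 such that for all sufficiently large T, ‖(1/T)∫₀^T w̄(t/T) f(θ + ρt) dt − ∫_{𝕋¹} f(θ̂)dθ̂‖ ≤ C·exp(−T^{ĉ}), uniformly in θ. -/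
open scoped Real
open Complex

/-- Normalizing constant `c = (∫₀¹ exp(-1/(s(1-s))) ds)⁻¹`. -/
noncomputable def cbar : ℝ := (∫ s in (0:ℝ)..1, Real.exp (-(s * (1 - s))⁻¹))⁻¹

/-- The bump weight `w̄(x) = c · exp(-1/(x(1-x)))` on `(0,1)`, `0` elsewhere. -/
noncomputable def wbar : ℝ → ℝ := fun x =>
  if 0 < x ∧ x < 1 then cbar * Real.exp (-(x * (1 - x))⁻¹) else 0

/-!
Expanding `f` in its Fourier series, the weighted average minus `f̂ 0` becomes
`∑_{k ≠ 0} e(kθ) 𝓕w̄(-kρT) f̂ k`, so everything rests on the decay of the Fourier transform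
of the bump `w̄`. Integrating by parts `n` times gives
`|2πξ|ⁿ ‖𝓕w̄ ξ‖ ≤ ∫ |w̄⁽ⁿ⁾| ≤ c (48 n³)ⁿ`: the derivatives of `exp(-1/x)` are
`Pₙ(1/x) exp(-1/x)` for explicit polynomials `Pₙ` of degree `2n`, and `yⁱ e^{-y} ≤ i!`.
Choosing `n ≈ |ξ|^{1/3}` turns this into `‖𝓕w̄ ξ‖ ≲ exp(-c |ξ|^{1/3})`, and since `ρ ≠ 0`
every frequency `kρT` with `k ≠ 0` has size at least `|ρ| T`.
-/

open scoped FourierTransform ContDiff Nat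
open MeasureTheory Polynomial

theorem Polynomial.abs_coeff_derivative_le {p : ℝ[X]} {B : ℝ} {d : ℕ}
    (hB : ∀ i, |p.coeff i| ≤ B) (hd : p.natDegree ≤ d) (i : ℕ) :
    |(derivative p).coeff i| ≤ d * B := by
  rw [coeff_derivative, abs_mul]
  by_cases hi : i + 1 ≤ d
  · rw [mul_comm, abs_of_nonneg (by positivity : (0 : ℝ) ≤ i + 1)]
    exact mul_le_mul (by exact_mod_cast hi) (hB _) (abs_nonneg _) d.cast_nonneg
  · rw [coeff_eq_zero_of_natDegree_lt (by omega), abs_zero, zero_mul]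
    exact mul_nonneg d.cast_nonneg ((abs_nonneg _).trans (hB 0))

theorem Polynomial.abs_eval_mul_exp_neg_le {p : ℝ[X]} {B : ℝ} {d : ℕ}
    (hB : ∀ i, |p.coeff i| ≤ B) (hd : p.natDegree ≤ d) {y : ℝ} (hy : 0 ≤ y) :
    |p.eval y| * Real.exp (-y) ≤ (d + 1) * B * d ! := by
  have hmono : ∀ i ∈ Finset.range (d + 1), |p.coeff i * y ^ i| * Real.exp (-y) ≤ B * d ! := by
    intro i hi
    have hfact : y ^ i * Real.exp (-y) ≤ d ! := by
      rw [Real.exp_neg, ← div_eq_mul_inv, div_le_iff₀ (Real.exp_pos y)]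
      calc y ^ i ≤ i ! * Real.exp y := by
            rw [← div_le_iff₀' (by positivity)]; exact Real.pow_div_factorial_le_exp _ hy i
        _ ≤ d ! * Real.exp y := by
            gcongr
            exact Finset.mem_range_succ_iff.mp hi
    rw [abs_mul, abs_of_nonneg (pow_nonneg hy i), mul_assoc]
    exact mul_le_mul (hB i) hfact (by positivity) ((abs_nonneg _).trans (hB 0))
  rw [eval_eq_sum_range' (Nat.lt_succ_of_le hd)]
  calc |∑ i ∈ Finset.range (d + 1), p.coeff i * y ^ i| * Real.exp (-y)
      ≤ ∑ i ∈ Finset.range (d + 1), |p.coeff i * y ^ i| * Real.exp (-y) := by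
        rw [← Finset.sum_mul]; gcongr; exact Finset.abs_sum_le_sum_abs _ _
    _ ≤ ∑ _i ∈ Finset.range (d + 1), B * d ! := Finset.sum_le_sum hmono
    _ = (d + 1) * B * d ! := by simp [mul_assoc]

namespace expNegInvGlue

noncomputable def poly : ℕ → ℝ[X]
  | 0 => 1
  | n + 1 => X ^ 2 * (poly n - derivative (poly n))

theorem iteratedDeriv_eq_poly_eval_inv_mul (n : ℕ) :
    iteratedDeriv n expNegInvGlue = fun x => (poly n).eval x⁻¹ * expNegInvGlue x := by
  induction n with
  | zero => funext x; simp [poly]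
  | succ n ih =>
    funext x
    rw [iteratedDeriv_succ, ih]
    exact (hasDerivAt_polynomial_eval_inv_mul (poly n) x).deriv

theorem natDegree_poly_le (n : ℕ) : (poly n).natDegree ≤ 2 * n := by
  induction n with
  | zero => simp [poly]
  | succ n ih =>
    have hsub : (poly n - derivative (poly n)).natDegree ≤ 2 * n :=
      (natDegree_sub_le _ _).trans (max_le ih ((natDegree_derivative_le _).trans (by omega)))
    calc (X ^ 2 * (poly n - derivative (poly n))).natDegree
        ≤ 2 + (poly n - derivative (poly n)).natDegree :=
          natDegree_mul_le.trans (by gcongr; exact natDegree_X_pow_le 2)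
      _ ≤ 2 * (n + 1) := by omega

theorem abs_coeff_poly_le (n i : ℕ) : |(poly n).coeff i| ≤ (2 * n : ℝ) ^ n := by
  induction n generalizing i with
  | zero => rcases i with _ | i <;> simp [poly, coeff_one]
  | succ n ih =>
    simp only [poly, coeff_X_pow_mul', coeff_sub]
    split_ifs
    · calc |(poly n).coeff (i - 2) - (derivative (poly n)).coeff (i - 2)|
          ≤ (2 * n : ℝ) ^ n + (2 * n : ℕ) * (2 * n : ℝ) ^ n :=
            (abs_sub _ _).trans
              (add_le_add (ih _) (abs_coeff_derivative_le ih (natDegree_poly_le n) _))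
        _ ≤ (2 * (n + 1 : ℕ) : ℝ) ^ (n + 1) := by
            push_cast
            rw [pow_succ]
            have : (2 * n : ℝ) ^ n ≤ (2 * (n + 1)) ^ n := by gcongr; linarith
            nlinarith [pow_nonneg (by positivity : (0 : ℝ) ≤ 2 * n) n]
    · rw [abs_zero]; positivity

theorem abs_iteratedDeriv_le (n : ℕ) (x : ℝ) :
    |iteratedDeriv n expNegInvGlue x| ≤ (24 * n ^ 3 : ℝ) ^ n := by
  simp only [iteratedDeriv_eq_poly_eval_inv_mul]
  rcases le_or_gt x 0 with hx | hx
  · rw [zero_of_nonpos hx, mul_zero, abs_zero]; positivity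
  have hglue : expNegInvGlue x = Real.exp (-x⁻¹) := by simp [expNegInvGlue, hx.not_ge]
  have h3 : (2 * n + 1 : ℝ) ≤ 3 ^ n := by
    have := one_add_mul_le_pow (a := (2 : ℝ)) (by norm_num) n
    norm_num at this; linarith
  have hfact : ((2 * n) ! : ℝ) ≤ (2 * n : ℝ) ^ (2 * n) := by
    exact_mod_cast Nat.factorial_le_pow (2 * n)
  rw [hglue, abs_mul, abs_of_pos (Real.exp_pos _)]
  calc |(poly n).eval x⁻¹| * Real.exp (-x⁻¹)
      ≤ ((2 * n : ℕ) + 1) * (2 * n : ℝ) ^ n * (2 * n) ! :=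
        abs_eval_mul_exp_neg_le (abs_coeff_poly_le n) (natDegree_poly_le n) (by positivity)
    _ ≤ 3 ^ n * (2 * n : ℝ) ^ n * (2 * n : ℝ) ^ (2 * n) := by push_cast; gcongr
    _ = (24 * n ^ 3 : ℝ) ^ n := by
        rw [pow_mul, ← mul_pow, ← mul_pow]; ring

end expNegInvGlue

theorem le_mul_exp_neg_rpow_of_forall_mul_pow_le {y C K x : ℝ} (hC : 0 ≤ C) (hK : 0 < K)
    (hx : 0 < x) (h : ∀ n : ℕ, y * x ^ n ≤ C * (K * n ^ 3) ^ n) :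
    y ≤ C * Real.exp 1 * Real.exp (-(x / (K * Real.exp 1)) ^ (3 : ℝ)⁻¹) := by
  set u := (x / (K * Real.exp 1)) ^ (3 : ℝ)⁻¹
  have hu : 0 ≤ u := by positivity
  -- the largest `n` with `K n³ ≤ x / e`, so that `(K n³ / x)ⁿ ≤ e⁻ⁿ`
  set n := ⌊u⌋₊
  have hcube : K * n ^ 3 ≤ x * (Real.exp 1)⁻¹ := by
    have : (n : ℝ) ^ 3 ≤ x / (K * Real.exp 1) := by
      calc (n : ℝ) ^ 3 ≤ u ^ 3 := by gcongr; exact Nat.floor_le hu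
        _ = x / (K * Real.exp 1) := Real.rpow_inv_natCast_pow (by positivity) three_ne_zero
    rw [le_div_iff₀ (by positivity)] at this
    rw [← div_eq_mul_inv, le_div_iff₀ (Real.exp_pos 1)]
    linarith
  calc y ≤ C * (K * n ^ 3) ^ n / x ^ n := by rw [le_div_iff₀ (by positivity)]; exact h n
    _ ≤ C * (x * (Real.exp 1)⁻¹) ^ n / x ^ n := by gcongr
    _ = C * Real.exp (-n) := by
        rw [mul_pow, mul_div_assoc, mul_div_cancel_left₀ _ (by positivity), Real.exp_neg,
          inv_pow, Real.exp_one_pow]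
    _ ≤ C * Real.exp (1 + -u) := by
        gcongr; linarith [Nat.lt_floor_add_one u]
    _ = C * Real.exp 1 * Real.exp (-u) := by rw [Real.exp_add, mul_assoc]

theorem rpow_inv_six_le_rpow_inv_three_mul {a T : ℝ} (ha : 0 < a) (hT : a⁻¹ ^ 2 ≤ T) :
    T ^ (6 : ℝ)⁻¹ ≤ (a * T) ^ (3 : ℝ)⁻¹ := by
  have hT0 : 0 ≤ T := (sq_nonneg _).trans hT
  have hsqrt : a⁻¹ ≤ √T := Real.le_sqrt_of_sq_le hT
  have hle : √T ≤ a * T := by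
    calc √T = √T * 1 := (mul_one _).symm
      _ ≤ √T * (a * √T) := by
          gcongr; rwa [← inv_le_iff_one_le_mul₀' ha]
      _ = a * T := by rw [mul_left_comm, Real.mul_self_sqrt hT0]
  calc T ^ (6 : ℝ)⁻¹ = √T ^ (3 : ℝ)⁻¹ := by
        rw [Real.sqrt_eq_rpow, ← Real.rpow_mul hT0]; norm_num
    _ ≤ (a * T) ^ (3 : ℝ)⁻¹ := by gcongr

theorem Real.norm_fourier_mul_pow_le_integral_norm_iteratedDeriv
    {E : Type*} [NormedAddCommGroup E] [NormedSpace ℂ E] {g : ℝ → E}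
    (hg : ContDiff ℝ ∞ g) (hint : ∀ n : ℕ, Integrable (iteratedDeriv n g)) (n : ℕ) (ξ : ℝ) :
    ‖𝓕 g ξ‖ * |2 * π * ξ| ^ n ≤ ∫ x, ‖iteratedDeriv n g x‖ := by
  have hfourier : ‖𝓕 (iteratedDeriv n g) ξ‖ ≤ ∫ x, ‖iteratedDeriv n g x‖ :=
    VectorFourier.norm_fourierIntegral_le_integral_norm 𝐞 volume (innerₗ ℝ) _ ξ
  rw [Real.fourier_iteratedDeriv (N := ⊤) hg (fun k _ => hint k) le_top] at hfourier
  refine le_trans (le_of_eq ?_) hfourier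
  simp [norm_smul, abs_mul, mul_comm]

theorem Real.fourier_comp_div {E : Type*} [NormedAddCommGroup E] [NormedSpace ℂ E]
    (g : ℝ → E) {T : ℝ} (hT : 0 < T) (ξ : ℝ) :
    𝓕 (fun t => g (t / T)) ξ = T • 𝓕 g (T * ξ) := by
  simp only [Real.fourier_real_eq_integral_exp_smul]
  rw [← abs_of_pos hT, ← Measure.integral_comp_div _ T, abs_of_pos hT]
  congr 1; funext t
  congr 3
  field_simp

theorem hasSum_fourier_integral_smul_comp_add_mul
    {B : Type*} [NormedAddCommGroup B] [NormedSpace ℂ B] [CompleteSpace B]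
    {f : ℝ → B} {fhat : ℤ → B} (hf : ∀ θ : ℝ,
      HasSum (fun k : ℤ => Complex.exp (2 * π * Complex.I * k * θ) • fhat k) (f θ))
    (hfhat : Summable (fun k => ‖fhat k‖)) {w : ℝ → ℂ} (hw : Integrable w) (θ ρ : ℝ) :
    HasSum (fun k : ℤ => (Complex.exp (2 * π * Complex.I * k * θ) * 𝓕 w (-(k * ρ))) • fhat k)
      (∫ t, w t • f (θ + ρ * t)) := by
  set e : ℤ → ℝ → ℂ := fun k t => Complex.exp (2 * π * Complex.I * k * ((θ + ρ * t : ℝ) : ℂ))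
  have he_norm : ∀ k t, ‖e k t‖ = 1 := fun k t => by
    rw [Complex.norm_exp]; simp
  have hint : ∀ k, Integrable (fun t => (w t * e k t) • fhat k) := fun k =>
    (hw.mul_bdd (by fun_prop) (.of_forall fun t => (he_norm k t).le)).smul_const _
  have hnorm : ∀ k, ∫ t, ‖(w t * e k t) • fhat k‖ = (∫ t, ‖w t‖) * ‖fhat k‖ := fun k => by
    simp only [norm_smul, norm_mul, he_norm, mul_one, integral_mul_const]
  have hsum := hasSum_integral_of_summable_integral_norm hint
    (by simpa only [hnorm] using hfhat.mul_left (∫ t, ‖w t‖))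
  convert hsum using 1
  · funext k
    have hphase : ∀ t, e k t = Complex.exp (2 * π * Complex.I * k * θ) *
        Complex.exp (↑(-2 * π * t * -(k * ρ)) * Complex.I) := fun t => by
      simp only [e, ← Complex.exp_add]; push_cast; ring_nf
    simp only [integral_smul_const, Real.fourier_real_eq_integral_exp_smul, hphase, smul_eq_mul,
      ← integral_const_mul]
    congr 2; funext t; ring
  · congr 1
    funext t
    simp only [← smul_smul, tsum_const_smul'' (w t)]
    exact congrArg _ (hf (θ + ρ * t)).tsum_eq.symm

theorem norm_sub_le_of_hasSum_smul {ι 𝕜 E : Type*} [NormedField 𝕜] [NormedAddCommGroup E]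
    [NormedSpace 𝕜 E] {c : ι → 𝕜} {a : ι → E} {s : E} {i₀ : ι} {ε : ℝ}
    (hs : HasSum (fun i => c i • a i) s) (hc₀ : c i₀ = 1) (hc : ∀ i ≠ i₀, ‖c i‖ ≤ ε)
    (hε : 0 ≤ ε) (ha : Summable fun i => ‖a i‖) :
    ‖s - a i₀‖ ≤ ε * ∑' i, ‖a i‖ := by
  classical
  refine (hs.sub (hasSum_ite_eq i₀ (a i₀))).norm_le_of_bounded (ha.hasSum.mul_left ε) fun i => ?_
  by_cases hi : i = i₀
  · subst hi; simpa [hc₀] using mul_nonneg hε (norm_nonneg _)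
  · rw [if_neg hi, sub_zero, norm_smul]
    exact mul_le_mul_of_nonneg_right (hc i hi) (norm_nonneg _)

theorem summable_norm_of_norm_le_mul {ι E : Type*} [NormedAddCommGroup E] {a : ι → E}
    {b : ι → ℝ} {i₀ : ι} {M : ℝ} (hab : ∀ i, i ≠ i₀ → ‖a i‖ ≤ M * b i)
    (hb : Summable fun i : {i // i ≠ i₀} => b i) : Summable fun i => ‖a i‖ := by
  rw [← (Set.finite_singleton i₀).summable_compl_iff]
  exact (hb.mul_left M).of_nonneg_of_le (fun _ => norm_nonneg _) fun i => hab i i.2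

noncomputable def bumpProfile (x : ℝ) : ℝ := expNegInvGlue x * expNegInvGlue (1 - x)

theorem contDiff_bumpProfile {n : ℕ∞} : ContDiff ℝ n bumpProfile :=
  expNegInvGlue.contDiff.mul (expNegInvGlue.contDiff.comp (contDiff_const.sub contDiff_id))

theorem bumpProfile_eq_exp {x : ℝ} (h0 : 0 < x) (h1 : x < 1) :
    bumpProfile x = Real.exp (-(x * (1 - x))⁻¹) := by
  have h1' : 0 < 1 - x := by linarith
  simp only [bumpProfile, expNegInvGlue, h0.not_ge, h1'.not_ge, if_false, ← Real.exp_add]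
  congr 1
  field_simp
  ring

theorem bumpProfile_eq_zero {x : ℝ} (h : ¬(0 < x ∧ x < 1)) : bumpProfile x = 0 := by
  rcases le_or_gt x 0 with hx | hx
  · rw [bumpProfile, expNegInvGlue.zero_of_nonpos hx, zero_mul]
  · rw [bumpProfile, expNegInvGlue.zero_of_nonpos (by linarith [not_and.mp h hx] : 1 - x ≤ 0),
      mul_zero]

theorem wbar_eq_mul_bumpProfile : wbar = fun x => cbar * bumpProfile x := by
  funext x
  by_cases h : 0 < x ∧ x < 1
  · rw [wbar, if_pos h, bumpProfile_eq_exp h.1 h.2]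
  · rw [wbar, if_neg h, bumpProfile_eq_zero h, mul_zero]

theorem integral_bumpProfile_pos : 0 < ∫ x in (0:ℝ)..1, bumpProfile x :=
  intervalIntegral.intervalIntegral_pos_of_pos_on
    ((contDiff_bumpProfile (n := 0)).continuous.intervalIntegrable 0 1)
    (fun x hx => by
      rw [bumpProfile_eq_exp hx.1 hx.2]; exact Real.exp_pos _)
    zero_lt_one

theorem cbar_eq : cbar = (∫ x in (0:ℝ)..1, bumpProfile x)⁻¹ := by
  simp only [cbar, intervalIntegral.integral_of_le zero_le_one, integral_Ioc_eq_integral_Ioo]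
  congr 1
  exact setIntegral_congr_fun measurableSet_Ioo fun x hx => (bumpProfile_eq_exp hx.1 hx.2).symm

theorem cbar_pos : 0 < cbar := cbar_eq ▸ inv_pos.mpr integral_bumpProfile_pos

theorem contDiff_wbar {n : ℕ∞} : ContDiff ℝ n wbar :=
  wbar_eq_mul_bumpProfile ▸ contDiff_const.mul contDiff_bumpProfile

theorem support_wbar_subset : Function.support wbar ⊆ Set.Ioo 0 1 := by
  intro x hx
  by_contra h
  exact hx (if_neg h)

theorem integral_wbar : ∫ x, wbar x = 1 := by
  rw [← setIntegral_eq_integral_of_forall_compl_eq_zero (s := Set.Ioc 0 1) fun x hx =>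
      Function.notMem_support.mp fun h => hx (Set.Ioo_subset_Ioc_self (support_wbar_subset h)),
    ← intervalIntegral.integral_of_le zero_le_one, wbar_eq_mul_bumpProfile,
    intervalIntegral.integral_const_mul, cbar_eq, inv_mul_cancel₀ integral_bumpProfile_pos.ne']

theorem abs_iteratedDeriv_wbar_le (n : ℕ) (x : ℝ) :
    |iteratedDeriv n wbar x| ≤ cbar * (48 * n ^ 3 : ℝ) ^ n := by
  have hglue {i : ℕ} (hi : i ≤ n) (y : ℝ) :
      |iteratedDeriv i expNegInvGlue y| ≤ (24 * n ^ 3 : ℝ) ^ i :=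
    (expNegInvGlue.abs_iteratedDeriv_le i y).trans (by gcongr)
  have hrefl : ContDiff ℝ n fun y => expNegInvGlue (1 - y) :=
    expNegInvGlue.contDiff.comp (contDiff_const.sub contDiff_id)
  rw [wbar_eq_mul_bumpProfile, iteratedDeriv_const_mul _ contDiff_bumpProfile.contDiffAt,
    abs_mul, abs_of_pos cbar_pos]
  refine mul_le_mul_of_nonneg_left ?_ cbar_pos.le
  rw [show bumpProfile = expNegInvGlue * fun y => expNegInvGlue (1 - y) from rfl,
    iteratedDeriv_mul expNegInvGlue.contDiff.contDiffAt hrefl.contDiffAt]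
  simp only [iteratedDeriv_comp_const_sub]
  calc |∑ i ∈ Finset.range (n + 1), n.choose i * iteratedDeriv i expNegInvGlue x *
          (-1 : ℝ) ^ (n - i) • iteratedDeriv (n - i) expNegInvGlue (1 - x)|
      ≤ ∑ i ∈ Finset.range (n + 1), n.choose i * (24 * n ^ 3 : ℝ) ^ n := by
        refine (Finset.abs_sum_le_sum_abs _ _).trans (Finset.sum_le_sum fun i hi => ?_)
        have hi : i ≤ n := Finset.mem_range_succ_iff.mp hi
        rw [smul_eq_mul, abs_mul, abs_mul, abs_mul, abs_pow, abs_neg, abs_one, one_pow, one_mul,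
          Nat.abs_cast, ← pow_mul_pow_sub _ hi, mul_assoc]
        gcongr
        exacts [hglue hi x, hglue (Nat.sub_le n i) _]
    _ = (48 * n ^ 3 : ℝ) ^ n := by
        rw [← Finset.sum_mul, ← Nat.cast_sum, Nat.sum_range_choose, Nat.cast_pow, ← mul_pow]
        norm_num [← mul_assoc]

noncomputable def wbarC (x : ℝ) : ℂ := wbar x

theorem contDiff_wbarC : ContDiff ℝ ∞ wbarC :=
  ofRealCLM.contDiff.comp contDiff_wbar

theorem norm_iteratedDeriv_wbarC (n : ℕ) (x : ℝ) :
    ‖iteratedDeriv n wbarC x‖ = |iteratedDeriv n wbar x| := by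
  rw [← norm_iteratedFDeriv_eq_norm_iteratedDeriv, ← Real.norm_eq_abs,
    ← norm_iteratedFDeriv_eq_norm_iteratedDeriv]
  exact ofRealLI.norm_iteratedFDeriv_comp_left contDiff_wbar.contDiffAt le_rfl

theorem support_iteratedDeriv_wbarC_subset (n : ℕ) :
    Function.support (iteratedDeriv n wbarC) ⊆ Set.Icc 0 1 := by
  have htsupport : tsupport wbarC ⊆ Set.Icc 0 1 :=
    closure_minimal ((Function.support_comp_subset ofReal_zero wbar).trans
      (support_wbar_subset.trans Set.Ioo_subset_Icc_self)) isClosed_Icc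
  intro x hx
  refine htsupport (support_iteratedFDeriv_subset (𝕜 := ℝ) n ?_)
  rw [Function.mem_support, iteratedDeriv_eq_iteratedFDeriv] at hx
  exact fun h => hx (by rw [h]; rfl)

theorem integrable_iteratedDeriv_wbarC (n : ℕ) : Integrable (iteratedDeriv n wbarC) :=
  (integrableOn_iff_integrable_of_support_subset (support_iteratedDeriv_wbarC_subset n)).mp
    ((contDiff_wbarC.continuous_iteratedDeriv n (mod_cast le_top)).integrableOn_Icc)

theorem integrable_wbarC : Integrable wbarC := by
  simpa using integrable_iteratedDeriv_wbarC 0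

theorem integral_norm_iteratedDeriv_wbarC_le (n : ℕ) :
    ∫ x, ‖iteratedDeriv n wbarC x‖ ≤ cbar * (48 * n ^ 3 : ℝ) ^ n := by
  rw [← setIntegral_eq_integral_of_forall_compl_eq_zero fun x hx => norm_eq_zero.mpr
    (Function.notMem_support.mp fun h => hx (support_iteratedDeriv_wbarC_subset n h))]
  have hbound : ∀ x ∈ Set.Icc (0 : ℝ) 1,
      ‖‖iteratedDeriv n wbarC x‖‖ ≤ cbar * (48 * n ^ 3 : ℝ) ^ n := fun x _ => by
    rw [norm_norm, norm_iteratedDeriv_wbarC]; exact abs_iteratedDeriv_wbar_le n x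
  simpa using (le_abs_self _).trans
    (norm_setIntegral_le_of_norm_le_const (μ := volume) measure_Icc_lt_top hbound)

theorem fourier_wbarC_zero : 𝓕 wbarC 0 = 1 := by
  simp [Real.fourier_real_eq_integral_exp_smul, wbarC, integral_complex_ofReal, integral_wbar]

theorem norm_fourier_wbarC_le {r ξ : ℝ} (hr : 0 < r) (hrξ : r ≤ |2 * π * ξ|) :
    ‖𝓕 wbarC ξ‖ ≤ cbar * Real.exp 1 * Real.exp (-(r / (48 * Real.exp 1)) ^ (3 : ℝ)⁻¹) :=
  le_mul_exp_neg_rpow_of_forall_mul_pow_le cbar_pos.le (by norm_num) hr fun n =>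
    calc ‖𝓕 wbarC ξ‖ * r ^ n ≤ ‖𝓕 wbarC ξ‖ * |2 * π * ξ| ^ n := by gcongr
      _ ≤ ∫ x, ‖iteratedDeriv n wbarC x‖ :=
        Real.norm_fourier_mul_pow_le_integral_norm_iteratedDeriv contDiff_wbarC
          integrable_iteratedDeriv_wbarC n ξ
      _ ≤ cbar * (48 * n ^ 3 : ℝ) ^ n := integral_norm_iteratedDeriv_wbarC_le n

theorem hasSum_wbar_average
    {B : Type*} [NormedAddCommGroup B] [NormedSpace ℂ B] [CompleteSpace B]
    {f : ℝ → B} {fhat : ℤ → B} (hf : ∀ θ : ℝ,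
      HasSum (fun k : ℤ => Complex.exp (2 * π * Complex.I * k * θ) • fhat k) (f θ))
    (hfhat : Summable (fun k => ‖fhat k‖)) {T : ℝ} (hT : 0 < T) (θ ρ : ℝ) :
    HasSum
      (fun k : ℤ => (Complex.exp (2 * π * Complex.I * k * θ) * 𝓕 wbarC (T * -(k * ρ))) • fhat k)
      ((T : ℂ)⁻¹ • ∫ t in (0:ℝ)..T, ((wbar (t / T) : ℝ) : ℂ) • f (θ + ρ * t)) := by
  have hsupport : ∀ t ∉ Set.Ioc 0 T, ((wbar (t / T) : ℝ) : ℂ) • f (θ + ρ * t) = 0 := by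
    intro t ht
    have hzero : wbar (t / T) = 0 := Function.notMem_support.mp fun h => ht <| by
      obtain ⟨h0, h1⟩ := support_wbar_subset h
      exact ⟨(div_pos_iff_of_pos_right hT).mp h0, ((div_lt_one hT).mp h1).le⟩
    rw [hzero, ofReal_zero, zero_smul]
  rw [intervalIntegral.integral_of_le hT.le,
    setIntegral_eq_integral_of_forall_compl_eq_zero hsupport]
  convert (hasSum_fourier_integral_smul_comp_add_mul hf hfhat
    (integrable_wbarC.comp_div hT.ne') θ ρ).const_smul (T : ℂ)⁻¹ using 2 with k
  · rw [Real.fourier_comp_div _ hT, smul_smul, Complex.real_smul, mul_left_comm,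
      inv_mul_cancel_left₀ (ofReal_ne_zero.mpr hT.ne')]
  · rfl

theorem norm_exp_mul_fourier_wbarC_le {k : ℤ} (hk : k ≠ 0) {ρ T : ℝ} (hρ : ρ ≠ 0)
    (hT : 0 < T) (θ : ℝ) :
    ‖Complex.exp (2 * π * Complex.I * k * θ) * 𝓕 wbarC (T * -(k * ρ))‖ ≤
      cbar * Real.exp 1 * Real.exp (-(2 * π * |ρ| / (48 * Real.exp 1) * T) ^ (3 : ℝ)⁻¹) := by
  have hk1 : (1 : ℝ) ≤ |(k : ℝ)| := by exact_mod_cast Int.one_le_abs hk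
  rw [norm_mul, Complex.norm_exp, show (2 * π * Complex.I * k * θ).re = 0 by simp,
    Real.exp_zero, one_mul, div_mul_eq_mul_div]
  refine norm_fourier_wbarC_le (by positivity) ?_
  calc 2 * π * |ρ| * T = 2 * π * T * |ρ| * 1 := by ring
    _ ≤ 2 * π * T * |ρ| * |(k : ℝ)| := by gcongr
    _ = |2 * π * (T * -(k * ρ))| := by
        rw [abs_mul (2 * π), abs_of_pos Real.two_pi_pos, abs_mul, abs_neg, abs_mul,
          abs_of_pos hT]
        ring

theorem stmt15_general
    {B : Type*} [NormedAddCommGroup B] [NormedSpace ℂ B] [CompleteSpace B]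
    (f : ℝ → B) (fhat : ℤ → B)
    (hf : ∀ θ : ℝ,
      HasSum (fun k : ℤ => Complex.exp (2 * π * Complex.I * k * θ) • fhat k) (f θ))
    (Δ Δt : ℝ → ℝ)
    (hΔge : ∀ x ≥ (1:ℝ), 1 ≤ Δ x)
    (M : ℝ)
    (hdecay : ∀ k : ℤ, k ≠ 0 → ‖fhat k‖ ≤ M / Δt |(k : ℝ)|)
    (hsum : Summable (fun k : {k : ℤ // k ≠ 0} => 1 / Δt |((k : ℤ) : ℝ)|))
    (α : ℝ) (hα : 0 < α) (ρ : ℝ)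
    (hρ : ∀ k : ℤ, k ≠ 0 → α / Δ |(k : ℝ)| ≤ |(k : ℝ) * ρ|) :
    ∃ chat C T₀ : ℝ, 0 < chat ∧ 0 < C ∧
      ∀ T : ℝ, T₀ ≤ T → ∀ θ : ℝ,
        ‖((T : ℂ))⁻¹ • (∫ t in (0:ℝ)..T, ((wbar (t / T) : ℝ) : ℂ) • f (θ + ρ * t)) -
          fhat 0‖ ≤ C * Real.exp (-T ^ chat) := by
  have hρ0 : ρ ≠ 0 := by
    rintro rfl
    have h := hρ 1 one_ne_zero
    simp only [Int.cast_one, abs_one, mul_zero, abs_zero] at h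
    exact (div_pos hα (zero_lt_one.trans_le (hΔge 1 le_rfl))).not_ge h
  have hfhat : Summable fun k => ‖fhat k‖ :=
    summable_norm_of_norm_le_mul (fun k hk => (hdecay k hk).trans_eq (mul_one_div M _).symm) hsum
  set a := 2 * π * |ρ| / (48 * Real.exp 1)
  have ha : 0 < a := by positivity
  set S := ∑' k, ‖fhat k‖
  have hc := cbar_pos
  refine ⟨(6 : ℝ)⁻¹, cbar * Real.exp 1 * S + 1, a⁻¹ ^ 2, by norm_num, by positivity,
    fun T hT θ => ?_⟩
  have hT0 : 0 < T := (by positivity : 0 < a⁻¹ ^ 2).trans_le hT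
  calc _ ≤ cbar * Real.exp 1 * Real.exp (-(a * T) ^ (3 : ℝ)⁻¹) * S :=
        norm_sub_le_of_hasSum_smul (hasSum_wbar_average hf hfhat hT0 θ ρ)
          (by simp [fourier_wbarC_zero]) (fun k hk => norm_exp_mul_fourier_wbarC_le hk hρ0 hT0 θ)
          (by positivity) hfhat
    _ ≤ cbar * Real.exp 1 * Real.exp (-T ^ (6 : ℝ)⁻¹) * S := by
        gcongr
        exact rpow_inv_six_le_rpow_inv_three_mul ha hT
    _ ≤ (cbar * Real.exp 1 * S + 1) * Real.exp (-T ^ (6 : ℝ)⁻¹) := by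
        nlinarith [Real.exp_pos (-T ^ (6 : ℝ)⁻¹)]

/-- exponential convergence of the continuous-time weighted Birkhoff
average on the circle `𝕋¹` with the bump weight `w̄`, for `ρ` nonresonant and
Fourier coefficients with `∑_{k≠0} 1/Δ̃(|k|) < ∞`. -/
theorem stmt15
    {B : Type*} [NormedAddCommGroup B] [NormedSpace ℂ B] [CompleteSpace B]
    (f : ℝ → B) (fhat : ℤ → B)
    (hf : ∀ θ : ℝ,
      HasSum (fun k : ℤ => Complex.exp (2 * π * Complex.I * k * θ) • fhat k) (f θ))
    (Δ Δt : ℝ → ℝ)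
    (hΔmono : StrictMonoOn Δ (Set.Ici 1)) (hΔge : ∀ x ≥ (1:ℝ), 1 ≤ Δ x)
    (hΔtmono : StrictMonoOn Δt (Set.Ici 1)) (hΔtge : ∀ x ≥ (1:ℝ), 1 ≤ Δt x)
    (M : ℝ) (hM : 0 < M)
    (hdecay : ∀ k : ℤ, k ≠ 0 → ‖fhat k‖ ≤ M / Δt |(k : ℝ)|)
    (hsum : Summable (fun k : {k : ℤ // k ≠ 0} => 1 / Δt |((k : ℤ) : ℝ)|))
    (α : ℝ) (hα : 0 < α) (ρ : ℝ)
    (hρ : ∀ k : ℤ, k ≠ 0 → α / Δ |(k : ℝ)| ≤ |(k : ℝ) * ρ|) :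
    ∃ chat C T₀ : ℝ, 0 < chat ∧ 0 < C ∧
      ∀ T : ℝ, T₀ ≤ T → ∀ θ : ℝ,
        ‖((T : ℂ))⁻¹ • (∫ t in (0:ℝ)..T, ((wbar (t / T) : ℝ) : ℂ) • f (θ + ρ * t)) -
          fhat 0‖ ≤ C * Real.exp (-T ^ chat) :=
  stmt15_general f fhat hf Δ Δt hΔge M hdecay hsum α hα ρ hρ
end
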